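/- Let T > 0, δ > 0 and P, V, W ∈ ℝ², and define f: [0,T] → ℝ² by f(t) = tV + (t²/T²)(3P − 2TV − TW) + (t³/T³)(−2P + TV + TW). Then f(0) = 0, f(T) = P, f'(0) = V and f'(T) = W. Moreover, if |V − W| ≤ δ and |P − TV| ≤ δT, then |f'(t) − V| ≤ 17δ for all t ∈ [0,T]. -/

import Mathlib

open Set

/-!
In terms of `P - T • V` and `V - W` the velocity of the curve is
`f' t = V + (6 t (T - t) / T³) • (P - T • V) + (t (2T - 3t) / T²) • (V - W)`.
On `[0, T]` the first weight is at most `3 / (2T)` and the second has absolute value at most `1`,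
so `‖f' t - V‖ ≤ (3/2) δ + δ`, well within `17 δ`.
-/

section CubicHermite

variable {E : Type*} [NormedAddCommGroup E] [NormedSpace ℝ E]

noncomputable def cubicHermite (T : ℝ) (P V W : E) (t : ℝ) : E :=
  t • V + (t ^ 2 / T ^ 2) • ((3:ℝ) • P - (2 * T) • V - T • W)
    + (t ^ 3 / T ^ 3) • ((-2:ℝ) • P + T • V + T • W)

variable {T : ℝ} (P V W : E)

@[simp]
lemma cubicHermite_zero : cubicHermite T P V W 0 = 0 := by
  simp [cubicHermite]

lemma cubicHermite_self (hT : T ≠ 0) : cubicHermite T P V W T = P := by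
  simp only [cubicHermite, div_self (pow_ne_zero _ hT), one_smul]
  module

lemma hasDerivAt_cubicHermite (hT : T ≠ 0) (t : ℝ) :
    HasDerivAt (cubicHermite T P V W)
      (V + (6 * t * (T - t) / T ^ 3) • (P - T • V) + (t * (2 * T - 3 * t) / T ^ 2) • (V - W)) t := by
  have hpow (n : ℕ) : HasDerivAt (fun t : ℝ => t ^ n / T ^ n) (n * t ^ (n - 1) / T ^ n) t :=
    (hasDerivAt_pow n t).div_const _
  refine (((hasDerivAt_id t).smul_const V).add
    ((hpow 2).smul_const ((3:ℝ) • P - (2 * T) • V - T • W))).add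
    ((hpow 3).smul_const ((-2:ℝ) • P + T • V + T • W)) |>.congr_deriv ?_
  norm_num only [one_smul]
  match_scalars <;> (try field_simp) <;> ring

lemma hasDerivAt_cubicHermite_zero (hT : T ≠ 0) : HasDerivAt (cubicHermite T P V W) V 0 := by
  simpa using hasDerivAt_cubicHermite P V W hT 0

lemma hasDerivAt_cubicHermite_self (hT : T ≠ 0) : HasDerivAt (cubicHermite T P V W) W T := by
  convert hasDerivAt_cubicHermite P V W hT T using 1
  match_scalars <;> field_simp <;> ring

lemma abs_hermiteWeight_left_le (hT : 0 < T) {t : ℝ} (ht : t ∈ Icc 0 T) :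
    |6 * t * (T - t) / T ^ 3| ≤ 3 / (2 * T) := by
  obtain ⟨ht0, htT⟩ := ht
  rw [abs_of_nonneg (by have := sub_nonneg.2 htT; positivity),
    div_le_div_iff₀ (by positivity) (by positivity)]
  have hsq : 4 * t * (T - t) ≤ T ^ 2 := by nlinarith [sq_nonneg (T - 2 * t)]
  nlinarith

lemma abs_hermiteWeight_right_le (hT : 0 < T) {t : ℝ} (ht : t ∈ Icc 0 T) :
    |t * (2 * T - 3 * t) / T ^ 2| ≤ 1 := by
  obtain ⟨ht0, htT⟩ := ht
  rw [abs_div, abs_of_pos (by positivity : 0 < T ^ 2), div_le_one (by positivity), abs_le]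
  constructor <;> nlinarith [sq_nonneg (T - t), mul_nonneg (sub_nonneg.2 htT) ht0]

lemma norm_deriv_cubicHermite_sub_le (hT : 0 < T) {δ : ℝ} (hVW : ‖V - W‖ ≤ δ)
    (hPV : ‖P - T • V‖ ≤ δ * T) {t : ℝ} (ht : t ∈ Icc 0 T) :
    ‖deriv (cubicHermite T P V W) t - V‖ ≤ 5 / 2 * δ := by
  set a := 6 * t * (T - t) / T ^ 3
  set b := t * (2 * T - 3 * t) / T ^ 2
  rw [(hasDerivAt_cubicHermite P V W hT.ne' t).deriv, add_assoc, add_sub_cancel_left]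
  calc ‖a • (P - T • V) + b • (V - W)‖
      ≤ |a| * ‖P - T • V‖ + |b| * ‖V - W‖ := by
        simpa only [norm_smul, Real.norm_eq_abs] using norm_add_le (a • (P - T • V)) (b • (V - W))
    _ ≤ 3 / (2 * T) * (δ * T) + 1 * δ := by
        gcongr
        exacts [abs_hermiteWeight_left_le hT ht, abs_hermiteWeight_right_le hT ht]
    _ = 5 / 2 * δ := by field_simp; ring

end CubicHermite

theorem cubic_interpolation (T δ : ℝ) (hT : 0 < T)
    (P V W : EuclideanSpace ℝ (Fin 2))
    (f : ℝ → EuclideanSpace ℝ (Fin 2))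
    (hf : ∀ t : ℝ, f t = t • V + (t ^ 2 / T ^ 2) • ((3:ℝ) • P - (2 * T) • V - T • W)
        + (t ^ 3 / T ^ 3) • ((-2:ℝ) • P + T • V + T • W)) :
    f 0 = 0 ∧ f T = P ∧ HasDerivAt f V 0 ∧ HasDerivAt f W T ∧
    ((‖V - W‖ ≤ δ ∧ ‖P - T • V‖ ≤ δ * T) →
      ∀ t ∈ Set.Icc (0:ℝ) T, ‖deriv f t - V‖ ≤ 17 * δ) := by
  obtain rfl : f = cubicHermite T P V W := funext hf
  refine ⟨cubicHermite_zero P V W, cubicHermite_self P V W hT.ne',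
    hasDerivAt_cubicHermite_zero P V W hT.ne', hasDerivAt_cubicHermite_self P V W hT.ne', ?_⟩
  rintro ⟨hVW, hPV⟩ t ht
  linarith [norm_deriv_cubicHermite_sub_le P V W hT hVW hPV ht, (norm_nonneg (V - W)).trans hVW]
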